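/- arXiv:2304.14884 — 2 statements merged into one kernel-verified Lean document; each statement's English description precedes it below -/
import Mathlib

section
/- Let ρ̄, ρ₁, ρ₂ be absolutely continuous probability measures on ℝ^d with finite second moments, and suppose ρ₁ = (S₁)_♯ ρ̄ and ρ₂ = (S₂)_♯ ρ̄ for maps S_k(x) = b_k x + a_k with b_k > 0. Then LOT^{ρ̄}(ρ₁,ρ₂) = OT(ρ₁,ρ₂), where LOT^{ρ̄}(ρ₁,ρ₂)² = ∫ |T_{ρ̄→ρ₁} − T_{ρ̄→ρ₂}|² dρ̄. -/
open MeasureTheory Set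

open scoped RealInnerProductSpace

lemma aux_key {d : ℕ} (c : ℝ) (hc : c ≠ 0) (v y z : EuclideanSpace ℝ (Fin d)) :
    ‖y - z‖ ^ 2 / 2 =
      (‖y‖ ^ 2 / 2 - (c * ‖y‖ ^ 2 / 2 + ⟪v, y⟫))
      + (‖z‖ ^ 2 / 2 - ‖z - v‖ ^ 2 / (2*c))
      + ‖c • y - (z - v)‖ ^ 2 / (2*c) := by
  have h1 : ‖y - z‖ ^ 2 = ‖y‖^2 - 2*⟪y,z⟫ + ‖z‖^2 := norm_sub_sq_real y z
  have h2 : ‖z - v‖ ^ 2 = ‖z‖^2 - 2*⟪z,v⟫ + ‖v‖^2 := norm_sub_sq_real z v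
  have h3 : ‖c • y - (z-v)‖ ^ 2 = c^2*‖y‖^2 - 2*(c*(⟪y,z⟫ - ⟪y,v⟫)) + ‖z-v‖^2 := by
    rw [norm_sub_sq_real, inner_smul_left, inner_sub_right, norm_smul]
    simp only [RCLike.ofReal_real_eq_id, id_eq, mul_pow, Real.norm_eq_abs, sq_abs,
      starRingEnd_apply, star_trivial]
  have h4 : ⟪v, y⟫ = ⟪y, v⟫ := real_inner_comm y v
  rw [h1, h3, h2, h4]
  field_simp
  ring

lemma aux_integrable {d : ℕ} {μ : Measure (EuclideanSpace ℝ (Fin d))} [IsFiniteMeasure μ]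
    (hmom : Integrable (fun x => ‖x‖ ^ 2) μ) {h : EuclideanSpace ℝ (Fin d) → ℝ}
    (hcont : Continuous h) (C : ℝ) (hb : ∀ x, |h x| ≤ C + C * ‖x‖ ^ 2) :
    Integrable h μ := by
  refine Integrable.mono' ((integrable_const C).add (hmom.const_mul C))
    hcont.aestronglyMeasurable ?_
  filter_upwards with x
  simpa [Real.norm_eq_abs] using hb x

set_option maxHeartbeats 1000000

/-- If `ρ₁, ρ₂` are obtained from a reference `ρ̄` by shift-scalings
`S_k x = b_k • x + a_k` (`b_k > 0`), then the linear optimal transport distance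
with reference `ρ̄` equals the optimal transport distance:
`LOT^{ρ̄}(ρ₁,ρ₂)² = ∫ ‖S₁ − S₂‖²/2 dρ̄` coincides with
`OT(ρ₁,ρ₂)² = inf_{π ∈ Π(ρ₁,ρ₂)} ∫ ‖x−y‖²/2 dπ` (the Monge maps `T_{ρ̄→ρ_k}`
being exactly `S_k`). -/
theorem lot_eq_ot_shift_scalings
    {d : ℕ} (ρbar ρ₁ ρ₂ : Measure (EuclideanSpace ℝ (Fin d)))
    [IsProbabilityMeasure ρbar]
    (hac : ρbar ≪ (volume : Measure (EuclideanSpace ℝ (Fin d))))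
    (hmom : Integrable (fun x => ‖x‖ ^ 2) ρbar)
    (b₁ b₂ : ℝ) (hb₁ : 0 < b₁) (hb₂ : 0 < b₂)
    (a₁ a₂ : EuclideanSpace ℝ (Fin d))
    (S₁ S₂ : EuclideanSpace ℝ (Fin d) → EuclideanSpace ℝ (Fin d))
    (hS₁ : ∀ x, S₁ x = b₁ • x + a₁) (hS₂ : ∀ x, S₂ x = b₂ • x + a₂)
    (hρ₁ : ρ₁ = Measure.map S₁ ρbar) (hρ₂ : ρ₂ = Measure.map S₂ ρbar) :
    sInf
      ((fun π : Measure (EuclideanSpace ℝ (Fin d) × EuclideanSpace ℝ (Fin d)) =>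
          ∫ p, ‖p.1 - p.2‖ ^ 2 / 2 ∂π) ''
        {π | IsProbabilityMeasure π ∧ Measure.map Prod.fst π = ρ₁ ∧
          Measure.map Prod.snd π = ρ₂})
      = ∫ x, ‖S₁ x - S₂ x‖ ^ 2 / 2 ∂ρbar := by
  set c : ℝ := b₂ / b₁ with hcdef
  have hcpos : 0 < c := div_pos hb₂ hb₁
  have hc : c ≠ 0 := hcpos.ne'
  set v : EuclideanSpace ℝ (Fin d) := a₂ - c • a₁ with hvdef
  set f : EuclideanSpace ℝ (Fin d) → ℝ :=
    fun y => ‖y‖ ^ 2 / 2 - (c * ‖y‖ ^ 2 / 2 + ⟪v, y⟫) with hfdef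
  set g : EuclideanSpace ℝ (Fin d) → ℝ :=
    fun z => ‖z‖ ^ 2 / 2 - ‖z - v‖ ^ 2 / (2*c) with hgdef
  -- continuity
  have hScont₁ : Continuous S₁ := by
    have : S₁ = fun x => b₁ • x + a₁ := funext hS₁
    rw [this]; exact (continuous_id.const_smul b₁).add continuous_const
  have hScont₂ : Continuous S₂ := by
    have : S₂ = fun x => b₂ • x + a₂ := funext hS₂
    rw [this]; exact (continuous_id.const_smul b₂).add continuous_const
  have hfcont : Continuous f := by
    apply Continuous.sub
    · exact (continuous_norm.pow 2).div_const 2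
    · exact ((continuous_const.mul (continuous_norm.pow 2)).div_const 2).add
        (continuous_const.inner continuous_id)
  have hgcont : Continuous g :=
    ((continuous_norm.pow 2).div_const 2).sub
      (((continuous_id.sub continuous_const).norm.pow 2).div_const (2*c))
  -- pointwise inequality and equality
  have hge : ∀ y z : EuclideanSpace ℝ (Fin d), f y + g z ≤ ‖y - z‖ ^ 2 / 2 := by
    intro y z
    rw [aux_key c hc v y z]
    have : 0 ≤ ‖c • y - (z - v)‖ ^ 2 / (2*c) := by positivity
    simp only [hfdef, hgdef]; linarith
  have heq : ∀ x, ‖S₁ x - S₂ x‖ ^ 2 / 2 = f (S₁ x) + g (S₂ x) := by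
    intro x
    have hz : c • S₁ x - (S₂ x - v) = 0 := by
      rw [hS₁, hS₂, hvdef]
      have hcb : c • (b₁ • x) = b₂ • x := by
        rw [smul_smul, hcdef, div_mul_cancel₀ _ hb₁.ne']
      rw [smul_add, hcb]
      abel
    have hkey := aux_key c hc v (S₁ x) (S₂ x)
    rw [hz] at hkey
    simp only [norm_zero, ne_eq, OfNat.ofNat_ne_zero, not_false_eq_true, zero_pow,
      zero_div, add_zero] at hkey
    exact hkey
  -- second moments
  have hS₁mom : Integrable (fun x => ‖S₁ x‖ ^ 2) ρbar := by
    refine aux_integrable hmom (hScont₁.norm.pow 2) (2*‖a₁‖^2 + 2*b₁^2) ?_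
    intro x
    rw [hS₁ x]
    have h1 : ‖b₁ • x + a₁‖ ≤ b₁ * ‖x‖ + ‖a₁‖ := by
      refine le_trans (norm_add_le _ _) ?_
      rw [norm_smul, Real.norm_eq_abs, abs_of_pos hb₁]
    rw [abs_of_nonneg (by positivity)]
    nlinarith [norm_nonneg x, norm_nonneg a₁, norm_nonneg (b₁ • x + a₁),
      sq_nonneg (b₁*‖x‖ - ‖a₁‖), mul_nonneg (sq_nonneg ‖a₁‖) (sq_nonneg ‖x‖),
      mul_nonneg (sq_nonneg b₁) (sq_nonneg ‖x‖)]
  have hS₂mom : Integrable (fun x => ‖S₂ x‖ ^ 2) ρbar := by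
    refine aux_integrable hmom (hScont₂.norm.pow 2) (2*‖a₂‖^2 + 2*b₂^2) ?_
    intro x
    rw [hS₂ x]
    have h1 : ‖b₂ • x + a₂‖ ≤ b₂ * ‖x‖ + ‖a₂‖ := by
      refine le_trans (norm_add_le _ _) ?_
      rw [norm_smul, Real.norm_eq_abs, abs_of_pos hb₂]
    rw [abs_of_nonneg (by positivity)]
    nlinarith [norm_nonneg x, norm_nonneg a₂, norm_nonneg (b₂ • x + a₂),
      sq_nonneg (b₂*‖x‖ - ‖a₂‖), mul_nonneg (sq_nonneg ‖a₂‖) (sq_nonneg ‖x‖),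
      mul_nonneg (sq_nonneg b₂) (sq_nonneg ‖x‖)]
  have hmom₁ : Integrable (fun y => ‖y‖ ^ 2) ρ₁ := by
    rw [hρ₁, integrable_map_measure (g := fun y : EuclideanSpace ℝ (Fin d) => ‖y‖ ^ 2)
        (continuous_norm.pow 2).aestronglyMeasurable
      hScont₁.measurable.aemeasurable]
    exact hS₁mom
  have hmom₂ : Integrable (fun y => ‖y‖ ^ 2) ρ₂ := by
    rw [hρ₂, integrable_map_measure (g := fun y : EuclideanSpace ℝ (Fin d) => ‖y‖ ^ 2)
        (continuous_norm.pow 2).aestronglyMeasurable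
      hScont₂.measurable.aemeasurable]
    exact hS₂mom
  haveI hP₁ : IsProbabilityMeasure ρ₁ := by
    rw [hρ₁]; exact Measure.isProbabilityMeasure_map hScont₁.measurable.aemeasurable
  haveI hP₂ : IsProbabilityMeasure ρ₂ := by
    rw [hρ₂]; exact Measure.isProbabilityMeasure_map hScont₂.measurable.aemeasurable
  -- integrability of f, g
  have hfint : Integrable f ρ₁ := by
    refine aux_integrable hmom₁ hfcont (|1 - c|/2 + ‖v‖ + 1) ?_
    intro y
    have h1 : |⟪v, y⟫| ≤ ‖v‖ * ‖y‖ := abs_real_inner_le_norm v y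
    have h2 : f y = (1 - c)/2 * ‖y‖^2 - ⟪v, y⟫ := by simp only [hfdef]; ring
    rw [h2]
    have h3 : |(1 - c)/2 * ‖y‖^2 - ⟪v, y⟫| ≤ |1 - c|/2 * ‖y‖^2 + |⟪v, y⟫| := by
      refine le_trans (abs_sub _ _) ?_
      rw [abs_mul, abs_div]
      simp [abs_of_nonneg (sq_nonneg (‖y‖))]
    have h4 : ‖v‖ * ‖y‖ ≤ ‖v‖ * (1 + ‖y‖^2) :=
      mul_le_mul_of_nonneg_left (by nlinarith [sq_nonneg (‖y‖ - 1)]) (norm_nonneg v)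
    have h5 : 0 ≤ |1 - c| * ‖y‖^2 := mul_nonneg (abs_nonneg _) (sq_nonneg _)
    nlinarith [sq_nonneg (‖y‖), abs_nonneg (1 - c)]
  have hgint : Integrable g ρ₂ := by
    refine aux_integrable hmom₂ hgcont (1/2 + 1/c + ‖v‖^2/c) ?_
    intro z
    have h2 : ‖z - v‖^2 ≤ 2*‖z‖^2 + 2*‖v‖^2 := by
      nlinarith [norm_sub_le z v, norm_nonneg z, norm_nonneg v, norm_nonneg (z - v),
        sq_nonneg (‖z‖ - ‖v‖)]
    have h3 : |g z| ≤ ‖z‖^2/2 + ‖z - v‖^2/(2*c) := by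
      have hA : (0:ℝ) ≤ ‖z‖^2/2 := by positivity
      have hB : (0:ℝ) ≤ ‖z - v‖^2/(2*c) := by positivity
      calc |g z| ≤ |‖z‖^2/2| + |‖z - v‖^2/(2*c)| := abs_sub _ _
      _ = ‖z‖^2/2 + ‖z - v‖^2/(2*c) := by rw [abs_of_nonneg hA, abs_of_nonneg hB]
    have h4 : ‖z - v‖^2/(2*c) ≤ ‖z‖^2/c + ‖v‖^2/c := by
      rw [← add_div, div_le_div_iff₀ (by positivity) hcpos]
      nlinarith [sq_nonneg (‖z‖), sq_nonneg (‖v‖)]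
    have h5 : 0 ≤ (‖v‖^2/c) * ‖z‖^2 := by positivity
    have h6 : 0 ≤ 1/c := by positivity
    have h7 : 0 ≤ (1/c) * ‖z‖^2 := by positivity
    have h8 : (1/2 + 1/c + ‖v‖^2/c) * ‖z‖^2
        = ‖z‖^2/2 + (1/c)*‖z‖^2 + (‖v‖^2/c)*‖z‖^2 := by ring
    have h9 : ‖z‖^2/c = (1/c)*‖z‖^2 := by ring
    linarith [h3, h4, h5, h6, h7]
  -- cost function
  have hcost_cont : Continuous
      (fun p : EuclideanSpace ℝ (Fin d) × EuclideanSpace ℝ (Fin d) => ‖p.1 - p.2‖ ^ 2 / 2) :=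
    ((continuous_fst.sub continuous_snd).norm.pow 2).div_const 2
  have hpair : Measurable (fun x => (S₁ x, S₂ x)) :=
    (hScont₁.prodMk hScont₂).measurable
  -- integrals of f, g against marginals expressed over ρbar
  have hfS : Integrable (fun x => f (S₁ x)) ρbar := by
    have := (integrable_map_measure hfcont.aestronglyMeasurable
      hScont₁.measurable.aemeasurable).mp (hρ₁ ▸ hfint)
    exact this
  have hgS : Integrable (fun x => g (S₂ x)) ρbar := by
    have := (integrable_map_measure hgcont.aestronglyMeasurable
      hScont₂.measurable.aemeasurable).mp (hρ₂ ▸ hgint)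
    exact this
  have hRHS_eq : ∫ x, ‖S₁ x - S₂ x‖ ^ 2 / 2 ∂ρbar = (∫ y, f y ∂ρ₁) + ∫ z, g z ∂ρ₂ := by
    have h0 : ∫ x, ‖S₁ x - S₂ x‖ ^ 2 / 2 ∂ρbar = ∫ x, (f (S₁ x) + g (S₂ x)) ∂ρbar :=
      integral_congr_ae (Filter.Eventually.of_forall heq)
    rw [h0, integral_add hfS hgS, hρ₁, hρ₂,
      integral_map hScont₁.measurable.aemeasurable hfcont.aestronglyMeasurable,
      integral_map hScont₂.measurable.aemeasurable hgcont.aestronglyMeasurable]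
  -- the explicit coupling
  set π₀ : Measure (EuclideanSpace ℝ (Fin d) × EuclideanSpace ℝ (Fin d)) :=
    Measure.map (fun x => (S₁ x, S₂ x)) ρbar with hπ₀
  haveI hπ₀prob : IsProbabilityMeasure π₀ :=
    Measure.isProbabilityMeasure_map hpair.aemeasurable
  have hπ₀fst : Measure.map Prod.fst π₀ = ρ₁ := by
    rw [hπ₀, Measure.map_map measurable_fst hpair, hρ₁]; rfl
  have hπ₀snd : Measure.map Prod.snd π₀ = ρ₂ := by
    rw [hπ₀, Measure.map_map measurable_snd hpair, hρ₂]; rfl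
  have hcost₀ : ∫ p, ‖p.1 - p.2‖ ^ 2 / 2 ∂π₀ = ∫ x, ‖S₁ x - S₂ x‖ ^ 2 / 2 ∂ρbar :=
    integral_map hpair.aemeasurable hcost_cont.aestronglyMeasurable
  have hmem : (∫ x, ‖S₁ x - S₂ x‖ ^ 2 / 2 ∂ρbar) ∈
      ((fun π : Measure (EuclideanSpace ℝ (Fin d) × EuclideanSpace ℝ (Fin d)) =>
          ∫ p, ‖p.1 - p.2‖ ^ 2 / 2 ∂π) ''
        {π | IsProbabilityMeasure π ∧ Measure.map Prod.fst π = ρ₁ ∧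
          Measure.map Prod.snd π = ρ₂}) :=
    ⟨π₀, ⟨hπ₀prob, hπ₀fst, hπ₀snd⟩, hcost₀⟩
  -- lower bound for an arbitrary coupling
  have hlb : ∀ r ∈ ((fun π : Measure (EuclideanSpace ℝ (Fin d) × EuclideanSpace ℝ (Fin d)) =>
          ∫ p, ‖p.1 - p.2‖ ^ 2 / 2 ∂π) ''
        {π | IsProbabilityMeasure π ∧ Measure.map Prod.fst π = ρ₁ ∧
          Measure.map Prod.snd π = ρ₂}),
      (∫ x, ‖S₁ x - S₂ x‖ ^ 2 / 2 ∂ρbar) ≤ r := by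
    rintro r ⟨π, ⟨hπprob, h1, h2⟩, rfl⟩
    haveI := hπprob
    have hf1 : Integrable (fun p : EuclideanSpace ℝ (Fin d) × EuclideanSpace ℝ (Fin d) =>
        f p.1) π :=
      (integrable_map_measure hfcont.aestronglyMeasurable
        measurable_fst.aemeasurable).mp (h1 ▸ hfint)
    have hg2 : Integrable (fun p : EuclideanSpace ℝ (Fin d) × EuclideanSpace ℝ (Fin d) =>
        g p.2) π :=
      (integrable_map_measure hgcont.aestronglyMeasurable
        measurable_snd.aemeasurable).mp (h2 ▸ hgint)
    have hn1 : Integrable (fun p : EuclideanSpace ℝ (Fin d) × EuclideanSpace ℝ (Fin d) =>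
        ‖p.1‖ ^ 2) π :=
      (integrable_map_measure (continuous_norm.pow 2).aestronglyMeasurable
        measurable_fst.aemeasurable).mp (h1 ▸ hmom₁)
    have hn2 : Integrable (fun p : EuclideanSpace ℝ (Fin d) × EuclideanSpace ℝ (Fin d) =>
        ‖p.2‖ ^ 2) π :=
      (integrable_map_measure (continuous_norm.pow 2).aestronglyMeasurable
        measurable_snd.aemeasurable).mp (h2 ▸ hmom₂)
    have hcostint : Integrable (fun p : EuclideanSpace ℝ (Fin d) × EuclideanSpace ℝ (Fin d) =>
        ‖p.1 - p.2‖ ^ 2 / 2) π := by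
      refine (hn1.add hn2).mono' hcost_cont.aestronglyMeasurable ?_
      filter_upwards with p
      have h3 : ‖p.1 - p.2‖ ≤ ‖p.1‖ + ‖p.2‖ := norm_sub_le _ _
      have h4 : (0:ℝ) ≤ ‖p.1 - p.2‖ ^ 2 / 2 := by positivity
      rw [Real.norm_of_nonneg h4]
      simp only [Pi.add_apply]
      nlinarith [norm_nonneg p.1, norm_nonneg p.2, norm_nonneg (p.1 - p.2),
        sq_nonneg (‖p.1‖ - ‖p.2‖)]
    have hint_eq : (∫ y, f y ∂ρ₁) + (∫ z, g z ∂ρ₂)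
        = ∫ p, (f p.1 + g p.2) ∂π := by
      rw [← h1, ← h2,
        integral_map measurable_fst.aemeasurable hfcont.aestronglyMeasurable,
        integral_map measurable_snd.aemeasurable hgcont.aestronglyMeasurable,
        ← integral_add hf1 hg2]
    rw [hRHS_eq, hint_eq]
    exact integral_mono (hf1.add hg2) hcostint (fun p => hge p.1 p.2)
  refine le_antisymm (csInf_le ⟨_, hlb⟩ hmem) (le_csInf ⟨_, hmem⟩ hlb)
end

section
/- Let u_μ(x) = cosh(μ(1−x))/cosh μ on (0,1) and T(y) = 1 − (1/μ) sinh^{−1}((sinh μ / sinh μ̄) sinh(μ̄(1−y))) the transport map from ρ_{μ̄} to ρ_μ. Then for μ, μ̄ ≥ μ_min ≥ 1, ‖u_{μ̄} − u_μ ∘ T‖_{L²(0,1)} ≤ |1/cosh μ − 1/cosh μ̄| ≤ 2 e^{−μ_min}. -/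
open Set Real

lemma key_alg (C Cb Sb s P Q : ℝ) (hCpos : 0 < C) (hCbpos : 0 < Cb) (hSb : 0 < Sb)
    (hA2 : P * Q * Sb ^ 2 = (Sb ^ 2 - s ^ 2) * (C ^ 2 - Cb ^ 2))
    (hQge : C + Cb ≤ Q) (hQpos : 0 < Q)
    (hkub : Sb ^ 2 - s ^ 2 ≤ Sb ^ 2) (hklb : 0 ≤ Sb ^ 2 - s ^ 2) :
    P ^ 2 ≤ (C - Cb) ^ 2 := by
  have h1 : P ^ 2 * (Q ^ 2 * Sb ^ 4) = (C - Cb) ^ 2 * ((Sb ^ 2 - s ^ 2) ^ 2 * (C + Cb) ^ 2) := by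
    linear_combination (P * Q * Sb ^ 2 + (Sb ^ 2 - s ^ 2) * (C ^ 2 - Cb ^ 2)) * hA2
  have h2 : (Sb ^ 2 - s ^ 2) * (C + Cb) ≤ Sb ^ 2 * Q :=
    mul_le_mul hkub hQge (by positivity) (by positivity)
  have h3 : ((Sb ^ 2 - s ^ 2) * (C + Cb)) ^ 2 ≤ (Sb ^ 2 * Q) ^ 2 :=
    pow_le_pow_left₀ (by positivity) h2 2
  have h4 : (C - Cb) ^ 2 * ((Sb ^ 2 - s ^ 2) ^ 2 * (C + Cb) ^ 2)
      ≤ (C - Cb) ^ 2 * (Q ^ 2 * Sb ^ 4) := by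
    have h5 : (Sb ^ 2 - s ^ 2) ^ 2 * (C + Cb) ^ 2 ≤ Q ^ 2 * Sb ^ 4 := by
      calc (Sb ^ 2 - s ^ 2) ^ 2 * (C + Cb) ^ 2 = ((Sb ^ 2 - s ^ 2) * (C + Cb)) ^ 2 := by ring
        _ ≤ (Sb ^ 2 * Q) ^ 2 := h3
        _ = Q ^ 2 * Sb ^ 4 := by ring
    exact mul_le_mul_of_nonneg_left h5 (sq_nonneg _)
  exact le_of_mul_le_mul_right (h1.trans_le h4) (by positivity)

lemma ptwise_alg (C Cb S Sb s : ℝ) (hC : 1 ≤ C) (hCb : 1 ≤ Cb)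
    (hS : 0 < S) (hSb : 0 < Sb) (hC2 : C ^ 2 = 1 + S ^ 2) (hCb2 : Cb ^ 2 = 1 + Sb ^ 2)
    (hs0 : 0 ≤ s) (hs1 : s ≤ Sb) :
    (Real.sqrt (1 + s ^ 2) / Cb - Real.sqrt (1 + (S / Sb * s) ^ 2) / C) ^ 2
      ≤ (1 / C - 1 / Cb) ^ 2 := by
  have hCpos : (0:ℝ) < C := by linarith
  have hCbpos : (0:ℝ) < Cb := by linarith
  obtain ⟨a, ha⟩ : ∃ a, a = Real.sqrt (1 + s ^ 2) := ⟨_, rfl⟩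
  obtain ⟨b, hb⟩ : ∃ b, b = Real.sqrt (1 + (S / Sb * s) ^ 2) := ⟨_, rfl⟩
  rw [← ha, ← hb]
  have ha2 : a ^ 2 = 1 + s ^ 2 := by rw [ha]; exact Real.sq_sqrt (by positivity)
  have hb2 : b ^ 2 = 1 + (S / Sb * s) ^ 2 := by rw [hb]; exact Real.sq_sqrt (by positivity)
  have ha0 : 0 ≤ a := ha ▸ Real.sqrt_nonneg _
  have hb0 : 0 ≤ b := hb ▸ Real.sqrt_nonneg _
  have ha1 : 1 ≤ a := by nlinarith
  have hb1 : 1 ≤ b := by nlinarith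
  have hb2' : b ^ 2 * Sb ^ 2 = Sb ^ 2 + S ^ 2 * s ^ 2 := by
    rw [hb2]; field_simp
  have hA2 : (a * C - b * Cb) * (a * C + b * Cb) * Sb ^ 2
      = (Sb ^ 2 - s ^ 2) * (C ^ 2 - Cb ^ 2) := by
    linear_combination (C ^ 2 * Sb ^ 2) * ha2 - Cb ^ 2 * hb2' +
      (s ^ 2 * Cb ^ 2) * hC2 - (s ^ 2 * C ^ 2) * hCb2
  have key : (a * C - b * Cb) ^ 2 ≤ (C - Cb) ^ 2 := by
    apply key_alg C Cb Sb s _ _ hCpos hCbpos hSb hA2 (by nlinarith) (by nlinarith)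
      (by nlinarith) (by nlinarith)
  have expand : (a / Cb - b / C) ^ 2 = (a * C - b * Cb) ^ 2 / (C * Cb) ^ 2 := by
    field_simp
  have expand2 : (1 / C - 1 / Cb) ^ 2 = (C - Cb) ^ 2 / (C * Cb) ^ 2 := by
    field_simp; ring
  rw [expand, expand2]
  exact div_le_div_of_nonneg_right key (by positivity) |>.trans_eq rfl

/-- Boundary-layer registration error bound: for `μ, μ̄ ≥ μ_min ≥ 1`, with
`u_μ(x) = cosh(μ(1−x))/cosh μ` and the transport map `T` from `ρ_μ̄` to `ρ_μ`,
`‖u_μ̄ − u_μ ∘ T‖_{L²(0,1)} ≤ |1/cosh μ − 1/cosh μ̄| ≤ 2 e^{−μ_min}`. -/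
theorem boundary_layer_error_bound
    (μ μbar μmin : ℝ) (hmin : 1 ≤ μmin) (hμ : μmin ≤ μ) (hμbar : μmin ≤ μbar)
    (u : ℝ → ℝ → ℝ) (hu : ∀ m x, u m x = Real.cosh (m * (1 - x)) / Real.cosh m)
    (T : ℝ → ℝ)
    (hT : ∀ y, T y = 1 - (1 / μ) *
      Real.arsinh ((Real.sinh μ / Real.sinh μbar) * Real.sinh (μbar * (1 - y)))) :
    Real.sqrt (∫ y in (0:ℝ)..1, (u μbar y - u μ (T y)) ^ 2)
      ≤ |1 / Real.cosh μ - 1 / Real.cosh μbar| ∧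
    |1 / Real.cosh μ - 1 / Real.cosh μbar| ≤ 2 * Real.exp (-μmin) := by
  have hμ1 : (1:ℝ) ≤ μ := le_trans hmin hμ
  have hμbar1 : (1:ℝ) ≤ μbar := le_trans hmin hμbar
  have hμpos : (0:ℝ) < μ := by linarith
  have hμbarpos : (0:ℝ) < μbar := by linarith
  set D := |1 / Real.cosh μ - 1 / Real.cosh μbar| with hD
  have hD0 : 0 ≤ D := abs_nonneg _
  -- pointwise bound
  have hpt : ∀ y ∈ Icc (0:ℝ) 1, (u μbar y - u μ (T y)) ^ 2 ≤ D ^ 2 := by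
    intro y hy
    obtain ⟨hy0, hy1⟩ := hy
    set s := Real.sinh (μbar * (1 - y)) with hs
    have hs0 : 0 ≤ s := Real.sinh_nonneg_iff.mpr (by nlinarith)
    have hs1 : s ≤ Real.sinh μbar := by
      apply Real.sinh_le_sinh.mpr
      nlinarith
    have hcosh_sqrt : ∀ t : ℝ, Real.cosh t = Real.sqrt (1 + Real.sinh t ^ 2) := by
      intro t
      rw [show (1 + Real.sinh t ^ 2) = Real.cosh t ^ 2 by rw [Real.cosh_sq]; ring,
        Real.sqrt_sq (Real.cosh_pos t).le]
    have hubar : u μbar y = Real.sqrt (1 + s ^ 2) / Real.cosh μbar := by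
      rw [hu, hcosh_sqrt]
    have huT : u μ (T y) =
        Real.sqrt (1 + (Real.sinh μ / Real.sinh μbar * s) ^ 2) / Real.cosh μ := by
      rw [hu, hT]
      have harg : μ * (1 - (1 - 1 / μ * Real.arsinh (Real.sinh μ / Real.sinh μbar * s)))
          = Real.arsinh (Real.sinh μ / Real.sinh μbar * s) := by
        field_simp; ring
      rw [harg, Real.cosh_arsinh]
    rw [hubar, huT]
    have hmain := ptwise_alg (Real.cosh μ) (Real.cosh μbar) (Real.sinh μ) (Real.sinh μbar) s
      (Real.one_le_cosh μ) (Real.one_le_cosh μbar)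
      (Real.sinh_pos_iff.mpr hμpos) (Real.sinh_pos_iff.mpr hμbarpos)
      (by rw [Real.cosh_sq]; ring) (by rw [Real.cosh_sq]; ring) hs0 hs1
    calc (Real.sqrt (1 + s ^ 2) / Real.cosh μbar -
          Real.sqrt (1 + (Real.sinh μ / Real.sinh μbar * s) ^ 2) / Real.cosh μ) ^ 2
        ≤ (1 / Real.cosh μ - 1 / Real.cosh μbar) ^ 2 := hmain
      _ = D ^ 2 := (sq_abs _).symm
  have hcont : Continuous (fun y => (u μbar y - u μ (T y)) ^ 2) := by
    have h1 : (fun y => (u μbar y - u μ (T y)) ^ 2) = fun y =>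
        (Real.cosh (μbar * (1 - y)) / Real.cosh μbar -
         Real.cosh (μ * (1 - T y)) / Real.cosh μ) ^ 2 := by
      funext y; rw [hu, hu]
    rw [h1]
    have hTc : Continuous T := by
      have : T = fun y => 1 - (1 / μ) *
          Real.arsinh ((Real.sinh μ / Real.sinh μbar) * Real.sinh (μbar * (1 - y))) := by
        funext y; exact hT y
      rw [this]
      exact continuous_const.sub (continuous_const.mul (Real.continuous_arsinh.comp
          (continuous_const.mul (Real.continuous_sinh.comp
            (continuous_const.mul (continuous_const.sub continuous_id))))))
    exact (((Real.continuous_cosh.comp (continuous_const.mul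
      (continuous_const.sub continuous_id))).div_const _).sub
      ((Real.continuous_cosh.comp (continuous_const.mul
        (continuous_const.sub hTc))).div_const _)).pow 2
  have hint : (∫ y in (0:ℝ)..1, (u μbar y - u μ (T y)) ^ 2) ≤ D ^ 2 := by
    have := intervalIntegral.integral_mono_on (μ := MeasureTheory.volume) zero_le_one
      (hcont.intervalIntegrable 0 1) (intervalIntegrable_const (c := D ^ 2)) hpt
    simpa using this
  constructor
  · calc Real.sqrt (∫ y in (0:ℝ)..1, (u μbar y - u μ (T y)) ^ 2)
        ≤ Real.sqrt (D ^ 2) := Real.sqrt_le_sqrt hint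
      _ = D := Real.sqrt_sq hD0
  · have hbound : ∀ x : ℝ, μmin ≤ x → 1 / Real.cosh x ≤ 2 * Real.exp (-μmin) := by
      intro x hx
      have h1 : Real.exp x / 2 ≤ Real.cosh x := by
        rw [Real.cosh_eq]
        have := Real.exp_pos (-x)
        linarith
      have h2 : Real.exp μmin ≤ Real.exp x := Real.exp_le_exp.mpr hx
      have h3 : (0:ℝ) < Real.exp μmin := Real.exp_pos _
      have h4 : 1 / Real.cosh x ≤ 2 / Real.exp x := by
        rw [div_le_div_iff₀ (Real.cosh_pos x) (Real.exp_pos x)]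
        linarith
      have h5 : 2 / Real.exp x ≤ 2 / Real.exp μmin := by
        apply div_le_div_of_nonneg_left (by norm_num) h3 h2
      calc 1 / Real.cosh x ≤ 2 / Real.exp x := h4
        _ ≤ 2 / Real.exp μmin := h5
        _ = 2 * Real.exp (-μmin) := by rw [Real.exp_neg]; ring
    have hA := hbound μ hμ
    have hB := hbound μbar hμbar
    have hApos : 0 < 1 / Real.cosh μ := by positivity
    have hBpos : 0 < 1 / Real.cosh μbar := by positivity
    rw [hD]
    exact abs_le.mpr ⟨by linarith, by linarith⟩
end
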